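/- Majority of mostly-agreeing inputs: let d be odd, and fix a coordinate. Suppose T^1,…,T^d and U^1,…,U^d are ±1-valued random variables at that coordinate such that the pairs (T^k, U^k) are independent across k, each T^k is uniform on {-1,+1}, and P(U^k ≠ T^k) = δ for each k. Then the probability that the majorities differ, P([Σ_k T^k] ≠ [Σ_k U^k]), is a monotonically nondecreasing function of δ on [0, 1/2] that equals 0 at δ = 0. -/

import Mathlib

def pm (b : Bool) : ℤ := if b then 1 else -1

/-- Sign/majority of an integer sum (nonzero when the number of ±1 summands is odd). -/
def msign (x : ℤ) : ℤ := if 0 < x then 1 else -1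

/-!
Write `ρ = 1 - 2δ`. Each coordinate `x i` of the flip pattern has law `(1 + ρ (-1)^(x i)) / 2`,
so the law of `x` expands in Walsh characters `χ_S` with weights `ρ^|S|`. Substituting
`u = t + x` and using `χ_S (t + u) = χ_S t * χ_S u` gives `E[f T * f U] = ∑_S ρ^|S| f̂(S)²`,
the noise stability of `f`. For `±1`-valued `f` the disagreement probability is
`(1 - E[f T * f U]) / 2`, and the noise stability is nondecreasing in `ρ ≥ 0`, that is,
nonincreasing in `δ ∈ [0, 1/2]`.
-/

open Finset

section BooleanCube

variable {ι : Type*}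

def boolSign (b : Bool) : ℝ := if b then -1 else 1

lemma boolSign_add (a b : Bool) : boolSign (a + b) = boolSign a * boolSign b := by
  cases a <;> cases b <;> norm_num [boolSign, Bool.add_eq_xor]

def walsh (S : Finset ι) (x : ι → Bool) : ℝ := ∏ i ∈ S, boolSign (x i)

lemma walsh_add (S : Finset ι) (x y : ι → Bool) : walsh S (x + y) = walsh S x * walsh S y := by
  simp only [walsh, Pi.add_apply, boolSign_add, prod_mul_distrib]

variable [Fintype ι]

def flipProb (δ : ℝ) (x : ι → Bool) : ℝ := ∏ i, if x i then δ else 1 - δ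

lemma flipProb_zero_of_ne {x : ι → Bool} (hx : x ≠ 0) : flipProb 0 x = 0 := by
  obtain ⟨i, hi⟩ := Function.ne_iff.mp hx
  exact prod_eq_zero (mem_univ i) (by simp_all [Bool.zero_eq_false])

lemma flipProb_eq_sum_walsh (δ : ℝ) (x : ι → Bool) :
    flipProb δ x = (2 ^ Fintype.card ι)⁻¹ * ∑ S, (1 - 2 * δ) ^ #S * walsh S x := by
  have hcoord (b : Bool) : (if b then δ else 1 - δ) = 2⁻¹ * (1 + (1 - 2 * δ) * boolSign b) := by
    cases b <;> norm_num [boolSign] <;> ring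
  simp only [flipProb, hcoord, prod_mul_distrib, prod_const, card_univ, inv_pow, prod_one_add,
    powerset_univ, walsh]

variable [DecidableEq ι]

lemma sum_flipProb (δ : ℝ) : ∑ x : ι → Bool, flipProb δ x = 1 := by
  simp only [flipProb]
  rw [← Fintype.prod_sum (fun (_ : ι) (b : Bool) => if b then δ else 1 - δ)]
  simp

noncomputable def walshCoeff (f : (ι → Bool) → ℝ) (S : Finset ι) : ℝ :=
  (2 ^ Fintype.card ι : ℝ)⁻¹ * ∑ x, f x * walsh S x

noncomputable def noiseStability (ρ : ℝ) (f : (ι → Bool) → ℝ) : ℝ :=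
  ∑ S : Finset ι, ρ ^ #S * walshCoeff f S ^ 2

lemma monotoneOn_noiseStability (f : (ι → Bool) → ℝ) :
    MonotoneOn (noiseStability · f) (Set.Ici 0) := fun _ ha _ _ hab =>
  show noiseStability _ f ≤ noiseStability _ f from
    sum_le_sum fun _ _ => mul_le_mul_of_nonneg_right (pow_le_pow_left₀ ha hab _) (sq_nonneg _)

theorem sum_flipProb_mul_eq_noiseStability (f : (ι → Bool) → ℝ) (δ : ℝ) :
    ∑ t, ∑ x, (2 ^ Fintype.card ι : ℝ)⁻¹ * flipProb δ x * (f t * f (t + x))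
      = noiseStability (1 - 2 * δ) f := by
  have hshift (t : ι → Bool) :
      ∑ x, (2 ^ Fintype.card ι : ℝ)⁻¹ * flipProb δ x * (f t * f (t + x))
        = ∑ u, (2 ^ Fintype.card ι : ℝ)⁻¹ * flipProb δ (t + u) * (f t * f u) :=
    Fintype.sum_equiv (Equiv.addLeft t) _ _ fun x => by
      -- negation on `ι → Bool` is the identity
      rw [Equiv.coe_addLeft, show t + (t + x) = x from neg_add_cancel_left t x]
  simp_rw [hshift, flipProb_eq_sum_walsh, walsh_add, noiseStability, walshCoeff, sq]
  simp only [mul_sum, sum_mul]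
  conv_rhs => rw [sum_comm]
  refine sum_congr rfl fun t _ => ?_
  conv_rhs => rw [sum_comm]
  exact sum_congr rfl fun u _ => sum_congr rfl fun S _ => by ring

variable {α : Type*} [DecidableEq α]

/-- `t + x` is `t` with the coordinates in which `x` is `true` flipped (addition on `Bool` is
`xor`), and `(2 ^ |ι|)⁻¹ * flipProb δ x` is the joint law of the uniform input `t` and the flip
pattern `x`. -/
noncomputable def disagreeProb (f : (ι → Bool) → α) (δ : ℝ) : ℝ :=
  ∑ t, ∑ x, (2 ^ Fintype.card ι : ℝ)⁻¹ * flipProb δ x * if f t ≠ f (t + x) then 1 else 0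

lemma disagreeProb_comp {β : Type*} [DecidableEq β] {g : α → β} (hg : Function.Injective g)
    (f : (ι → Bool) → α) : disagreeProb (g ∘ f) = disagreeProb f := by
  funext δ
  simp only [disagreeProb, Function.comp_apply, hg.ne_iff]

lemma disagreeProb_zero (f : (ι → Bool) → α) : disagreeProb f 0 = 0 := by
  refine sum_eq_zero fun t _ => sum_eq_zero fun x _ => ?_
  by_cases hx : x = 0
  · simp [hx]
  · simp [flipProb_zero_of_ne hx]

theorem disagreeProb_eq_noiseStability {f : (ι → Bool) → ℝ} (hf : ∀ x, f x = 1 ∨ f x = -1)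
    (δ : ℝ) : disagreeProb f δ = (1 - noiseStability (1 - 2 * δ) f) / 2 := by
  have hindicator (t u : ι → Bool) : (if f t ≠ f u then (1 : ℝ) else 0) = (1 - f t * f u) / 2 := by
    rcases hf t with h | h <;> rcases hf u with h' | h' <;> norm_num [h, h']
  have htotal :
      ∑ _t : ι → Bool, ∑ x : ι → Bool, (2 ^ Fintype.card ι : ℝ)⁻¹ * flipProb δ x = 1 := by
    simp [← mul_sum, sum_flipProb]
  rw [← sum_flipProb_mul_eq_noiseStability, ← htotal]
  simp only [disagreeProb, hindicator, ← sum_sub_distrib, sum_div]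
  exact sum_congr rfl fun t _ => sum_congr rfl fun x _ => by ring

theorem monotoneOn_disagreeProb {f : (ι → Bool) → ℝ} (hf : ∀ x, f x = 1 ∨ f x = -1) :
    MonotoneOn (disagreeProb f) (Set.Icc 0 (1 / 2)) := by
  intro a ha b hb hab
  have hstab : noiseStability (1 - 2 * b) f ≤ noiseStability (1 - 2 * a) f :=
    monotoneOn_noiseStability f (Set.mem_Ici.2 (by linarith [hb.2]))
      (Set.mem_Ici.2 (by linarith [ha.2])) (by linarith)
  rw [disagreeProb_eq_noiseStability hf, disagreeProb_eq_noiseStability hf]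
  linarith

end BooleanCube

lemma msign_eq_one_or_neg_one (x : ℤ) : msign x = 1 ∨ msign x = -1 := by
  unfold msign
  split_ifs <;> simp

lemma pm_add (a b : Bool) : pm (a + b) = if b then -pm a else pm a := by
  cases a <;> cases b <;> rfl

def majority {ι : Type*} [Fintype ι] (t : ι → Bool) : ℤ := msign (∑ i, pm (t i))

theorem stmt16_general (d : ℕ) :
    let g : ℝ → ℝ := fun δ =>
      ∑ tf : (Fin d → Bool) × (Fin d → Bool),
        ((1 / 2 ^ d) * ∏ k : Fin d, (if tf.2 k then δ else 1 - δ)) *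
          (if msign (∑ k, pm (tf.1 k))
              ≠ msign (∑ k, (if tf.2 k then -pm (tf.1 k) else pm (tf.1 k)))
           then (1 : ℝ) else 0)
    MonotoneOn g (Set.Icc (0 : ℝ) (1/2)) ∧ g 0 = 0 := by
  intro g
  have hg : g = disagreeProb ((↑) ∘ majority : (Fin d → Bool) → ℝ) := by
    rw [disagreeProb_comp Int.cast_injective]
    funext δ
    simp only [g, disagreeProb, majority, flipProb, Pi.add_apply, pm_add, Fintype.sum_prod_type,
      one_div, Fintype.card_fin]
  have hmajority (t : Fin d → Bool) : ((majority t : ℤ) : ℝ) = 1 ∨ ((majority t : ℤ) : ℝ) = -1 := by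
    rcases msign_eq_one_or_neg_one (∑ i, pm (t i)) with h | h <;> simp [majority, h]
  rw [hg]
  exact ⟨monotoneOn_disagreeProb hmajority, disagreeProb_zero _⟩

/-- Majority of mostly-agreeing inputs: with d odd, T^1,…,T^d i.i.d. uniform ±1 and
U^k = T^k flipped independently with probability δ, the probability that the majorities
of the T's and of the U's differ is a monotone nondecreasing function of δ on [0, 1/2]
which vanishes at δ = 0. -/
theorem stmt16 (d : ℕ) (hd : Odd d) :
    let g : ℝ → ℝ := fun δ =>
      ∑ tf : (Fin d → Bool) × (Fin d → Bool),
        ((1 / 2 ^ d) * ∏ k : Fin d, (if tf.2 k then δ else 1 - δ)) *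
          (if msign (∑ k, pm (tf.1 k))
              ≠ msign (∑ k, (if tf.2 k then -pm (tf.1 k) else pm (tf.1 k)))
           then (1 : ℝ) else 0)
    MonotoneOn g (Set.Icc (0 : ℝ) (1/2)) ∧ g 0 = 0 :=
  stmt16_general d
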